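/- arXiv:2201.11020 — 2 statements merged into one kernel-verified Lean document; each statement's English description precedes it below -/
import Mathlib

section
/- Suppose a(ξ), b(ξ), c(ξ) ∈ ξ⁻¹·𝒜[ε][[ξ⁻¹]] satisfy ε∂(a(ξ)) = r·b(ξ) + q·c(ξ), ε∂(b(ξ)) + 2q·a(ξ) − 2ξ·b(ξ) + 2q = 0, and ε∂(c(ξ)) + 2r·a(ξ) + 2ξ·c(ξ) + 2r = 0 (identities in the Laurent ring 𝒜[ε][[ξ⁻¹]][ξ]). Then ∂(a(ξ)² + 2a(ξ) + b(ξ)c(ξ)) = 0. -/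
set_option synthInstance.maxHeartbeats 1000000
set_option maxHeartbeats 1000000

noncomputable section

open scoped BigOperators

/-- Index set of the generators `qᵢ, rᵢ` of 𝒜. -/
inductive NLSVar : Type
  | q : ℕ → NLSVar
  | r : ℕ → NLSVar

/-- 𝒜 = ℂ[q₀, r₀, q₁, r₁, …]. -/
abbrev NLSA : Type := MvPolynomial NLSVar ℂ

/-- 𝒜[ε, ε⁻¹], as Laurent polynomials in ε over 𝒜. -/
abbrev NLSE : Type := LaurentPolynomial NLSA

instance : CommRing NLSE := inferInstance
instance : Algebra ℂ NLSE := inferInstance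

/-- The generator qᵢ viewed in 𝒜[ε,ε⁻¹]. -/
def qv (i : ℕ) : NLSE := LaurentPolynomial.C (MvPolynomial.X (NLSVar.q i))

/-- The generator rᵢ viewed in 𝒜[ε,ε⁻¹]. -/
def rv (i : ℕ) : NLSE := LaurentPolynomial.C (MvPolynomial.X (NLSVar.r i))

/-- ε ∈ 𝒜[ε,ε⁻¹]. -/
def eps : NLSE := LaurentPolynomial.T 1

/-- ε⁻¹ ∈ 𝒜[ε,ε⁻¹]. -/
def epsInv : NLSE := LaurentPolynomial.T (-1)

/-- Membership in the subring 𝒜[ε] ⊆ 𝒜[ε,ε⁻¹]: no negative powers of ε. -/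
def inAE (x : NLSE) : Prop := ∀ n : ℤ, n < 0 → (show ℤ →₀ NLSA from x.coeff) n = 0

/-- The Laurent-series ring 𝒜[ε,ε⁻¹][[ξ⁻¹]][ξ]; the Hahn-series exponent `n`
records the power of ξ⁻¹. -/
abbrev NLSL : Type := LaurentSeries NLSE

instance : CommRing NLSL := inferInstance
instance : Algebra ℂ NLSL := inferInstance

/-- ξ as a Laurent series in ξ⁻¹. -/
def xiL : NLSL := HahnSeries.single (-1 : ℤ) 1

/-- Apply a zero-preserving map to all coefficients of a Laurent series. -/
def coeffMap {R S : Type*} [Zero R] [Zero S] (f : ZeroHom R S)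
    (x : HahnSeries ℤ R) : HahnSeries ℤ S where
  coeff n := f (x.coeff n)
  isPWO_support' := x.isPWO_support'.mono (by
    intro n hn
    simp only [Function.mem_support, ne_eq] at hn ⊢
    exact fun h => hn (by rw [h, map_zero]))

/-- The derivation ∂, applied coefficientwise to a Laurent series in ξ⁻¹. -/
def dmap (d : Derivation ℂ NLSE NLSE) : NLSL → NLSL :=
  coeffMap ⟨fun x => d x, map_zero d⟩

/-- `∂` is the (unique) derivation of 𝒜[ε,ε⁻¹] with ∂(qᵢ)=qᵢ₊₁, ∂(rᵢ)=rᵢ₊₁, ∂(ε)=0. -/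
def IsDel (del : Derivation ℂ NLSE NLSE) : Prop :=
  (∀ i, del (qv i) = qv (i + 1)) ∧ (∀ i, del (rv i) = rv (i + 1)) ∧ del eps = 0

/-- The constant embedding 𝒜[ε,ε⁻¹] → 𝒜[ε,ε⁻¹][[ξ⁻¹]][ξ]. -/
def CL (x : NLSE) : NLSL := HahnSeries.C x

/-- The matrix U(ξ) = [[−ξ, −q],[r, ξ]]. -/
def Umat : Matrix (Fin 2) (Fin 2) NLSL :=
  !![-xiL, -(CL (qv 0)); CL (rv 0), xiL]

/-- The matrix [[2+a, b],[c, −a]]. -/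
def Rmat (a b c : NLSL) : Matrix (Fin 2) (Fin 2) NLSL := !![2 + a, b; c, -a]

/-- `a, b, c` are the entries of the (unique) basic matrix resolvent
R(ξ) = [[2+a(ξ), b(ξ)],[c(ξ), −a(ξ)]]. -/
def IsMR (del : Derivation ℂ NLSE NLSE) (a b c : NLSL) : Prop :=
  (∀ n : ℤ, n ≤ 0 → a.coeff n = 0) ∧
  (∀ n : ℤ, n ≤ 0 → b.coeff n = 0) ∧
  (∀ n : ℤ, n ≤ 0 → c.coeff n = 0) ∧
  (∀ n : ℤ, inAE (a.coeff n)) ∧ (∀ n : ℤ, inAE (b.coeff n)) ∧ (∀ n : ℤ, inAE (c.coeff n)) ∧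
  CL eps • (Rmat a b c).map (dmap del)
      + (Umat * Rmat a b c - Rmat a b c * Umat) = 0 ∧
  (Rmat a b c).det = 0

/-- A_j, the ξ^{−j−1}-coefficient of a(ξ). -/
def coA (a : NLSL) (j : ℕ) : NLSE := a.coeff (j + 1 : ℤ)

/-- The NLS derivations D_j: derivations of 𝒜[ε,ε⁻¹] commuting with ∂, annihilating ε,
with D_j(q) = 2^{j+1} ε⁻¹ B_{j+1} and D_j(r) = 2^{j+1} ε⁻¹ C_{j+1}. -/
def IsNLSD (del : Derivation ℂ NLSE NLSE) (b c : NLSL)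
    (D : ℕ → Derivation ℂ NLSE NLSE) : Prop :=
  (∀ j x, D j (del x) = del (D j x)) ∧
  (∀ j, D j eps = 0) ∧
  (∀ j, D j (qv 0) = (2 : NLSE) ^ (j + 1) * epsInv * coA b (j + 1)) ∧
  (∀ j, D j (rv 0) = (2 : NLSE) ^ (j + 1) * epsInv * coA c (j + 1))

end

/-! Since ∂ acts coefficientwise it is a derivation of the Laurent-series ring, so
`ε∂(a² + 2a + bc) = (2a + 2)·ε∂a + c·ε∂b + b·ε∂c`. Substituting the three equations, the
`ξ`-terms and the terms in `q`, `r` cancel identically, and `ε` is a unit in `𝒜[ε, ε⁻¹]`. -/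

lemma dmap_coeff (d : Derivation ℂ NLSE NLSE) (x : NLSL) (n : ℤ) :
    (dmap d x).coeff n = d (x.coeff n) := rfl

lemma dmap_support_subset (d : Derivation ℂ NLSE NLSE) (x : NLSL) :
    (dmap d x).support ⊆ x.support := fun n hn h =>
  hn (by rw [dmap_coeff, h, map_zero])

lemma dmap_add (d : Derivation ℂ NLSE NLSE) (x y : NLSL) :
    dmap d (x + y) = dmap d x + dmap d y := by
  refine HahnSeries.ext (funext fun n => ?_)
  simp only [dmap_coeff, HahnSeries.coeff_add, map_add]

lemma dmap_mul (d : Derivation ℂ NLSE NLSE) (x y : NLSL) :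
    dmap d (x * y) = dmap d x * y + x * dmap d y := by
  refine HahnSeries.ext (funext fun n => ?_)
  rw [HahnSeries.coeff_add, dmap_coeff,
    HahnSeries.coeff_mul_left' x.isPWO_support (dmap_support_subset d x),
    HahnSeries.coeff_mul_right' y.isPWO_support (dmap_support_subset d y),
    HahnSeries.coeff_mul, map_sum, ← Finset.sum_add_distrib]
  refine Finset.sum_congr rfl fun ij _ => ?_
  rw [Derivation.leibniz, smul_eq_mul, smul_eq_mul, dmap_coeff, dmap_coeff, add_comm, mul_comm]

lemma isUnit_CL_eps : IsUnit (CL eps) :=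
  (LaurentPolynomial.isUnit_T 1).map HahnSeries.C

theorem nls_resolvent_first_integral_general
    (del : Derivation ℂ NLSE NLSE)
    (a b c : NLSL)
    (h1 : CL eps * dmap del a = CL (rv 0) * b + CL (qv 0) * c)
    (h2 : CL eps * dmap del b + 2 * CL (qv 0) * a - 2 * xiL * b + 2 * CL (qv 0) = 0)
    (h3 : CL eps * dmap del c + 2 * CL (rv 0) * a + 2 * xiL * c + 2 * CL (rv 0) = 0) :
    dmap del (a * a + 2 * a + b * c) = 0 := by
  have leibniz : dmap del (a * a + 2 * a + b * c)
      = (2 * a + 2) * dmap del a + c * dmap del b + b * dmap del c := by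
    rw [two_mul, dmap_add, dmap_add, dmap_add, dmap_mul, dmap_mul]
    ring
  refine isUnit_CL_eps.mul_right_eq_zero.mp ?_
  rw [leibniz]
  linear_combination (2 * a + 2) * h1 + c * h2 + b * h3

/-- if a(ξ), b(ξ), c(ξ) ∈ ξ⁻¹𝒜[ε][[ξ⁻¹]] satisfy the three linear
equations, then ∂(a² + 2a + bc) = 0. -/
theorem nls_resolvent_first_integral
    (del : Derivation ℂ NLSE NLSE) (hdel : IsDel del)
    (a b c : NLSL)
    (ha0 : ∀ n : ℤ, n ≤ 0 → a.coeff n = 0)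
    (hb0 : ∀ n : ℤ, n ≤ 0 → b.coeff n = 0)
    (hc0 : ∀ n : ℤ, n ≤ 0 → c.coeff n = 0)
    (haE : ∀ n : ℤ, inAE (a.coeff n))
    (hbE : ∀ n : ℤ, inAE (b.coeff n))
    (hcE : ∀ n : ℤ, inAE (c.coeff n))
    (h1 : CL eps * dmap del a = CL (rv 0) * b + CL (qv 0) * c)
    (h2 : CL eps * dmap del b + 2 * CL (qv 0) * a - 2 * xiL * b + 2 * CL (qv 0) = 0)
    (h3 : CL eps * dmap del c + 2 * CL (rv 0) * a + 2 * xiL * c + 2 * CL (rv 0) = 0) :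
    dmap del (a * a + 2 * a + b * c) = 0 :=
  nls_resolvent_first_integral_general del a b c h1 h2 h3
end

section
/- The NLS derivations commute pairwise: for all i, j ≥ 0, D_i ∘ D_j = D_j ∘ D_i as derivations of 𝒜[ε,ε⁻¹]. -/
set_option synthInstance.maxHeartbeats 1000000
set_option maxHeartbeats 1000000

/-!
Write `x_s` for the coefficient of `ξ⁻ˢ` in a series `x`. Applying `D_i` to the defining
equations of the resolvent shows that `ε D_i R - 2^i [R, (ξ^{i+1} R)₊]` solves the linearised
equations with no constant term, and these equations determine a solution coefficient by
coefficient, so `ε D_i R = 2^i [R, (ξ^{i+1} R)₊]`. Its `ξ^{-j-2}` coefficient gives, with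
`M = i + j + 3`,
  `ε² D_i D_j q = 2^{i+j+2} (b_M + ∑_{i+1 < s < M} (b_s a_{M-s} - a_s b_{M-s}))`,
which is symmetric in `i, j` because the summand is odd under `s ↦ M - s`; likewise for `r`.
So the commutator `[D_i, D_j]` is a derivation that commutes with `∂` and kills `ε, q, r`,
hence kills every `qₖ = ∂ᵏ q` and `rₖ = ∂ᵏ r`, and vanishes.
-/

noncomputable section

namespace NLS

open HahnSeries Finset

section LaurentSeries

variable {R : Type*} [CommRing R]

theorem coeff_C_mul (u : R) (x : LaurentSeries R) (n : ℤ) : (C u * x).coeff n = u * x.coeff n := by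
  rw [C_apply, coeff_single_zero_mul]

theorem coeff_two_mul (x : LaurentSeries R) (n : ℤ) :
    (2 * x).coeff n = 2 * x.coeff n := by
  rw [two_mul, coeff_add, two_mul]

theorem coeff_mul_eq_zero_of_pos {x y : LaurentSeries R} (hx : ∀ n ≤ 0, x.coeff n = 0) {n : ℤ}
    (hy : ∀ m < n, y.coeff m = 0) : (x * y).coeff n = 0 := by
  rw [coeff_mul]
  refine sum_eq_zero fun ⟨j, k⟩ hjk => ?_
  obtain ⟨hj, -, rfl⟩ := mem_antidiagonal.1 hjk
  have hj : 0 < j := by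
    by_contra h
    exact hj (hx j (by omega))
  rw [hy k (by omega), mul_zero]

variable (R) in
/-- The series in `ξ⁻¹ R[[ξ⁻¹]]`; the Hahn-series exponent is the power of `ξ⁻¹`. -/
def posSupported : NonUnitalSubring (LaurentSeries R) where
  carrier := {x | ∀ n ≤ 0, x.coeff n = 0}
  zero_mem' _ _ := rfl
  add_mem' hx hy n hn := by rw [coeff_add, hx n hn, hy n hn, add_zero]
  neg_mem' hx n hn := by rw [coeff_neg, hx n hn, neg_zero]
  mul_mem' hx hy n hn := coeff_mul_eq_zero_of_pos hx fun m hm => hy m (by omega)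

theorem C_mul_mem_posSupported (u : R) {x : LaurentSeries R} (hx : x ∈ posSupported R) :
    C u * x ∈ posSupported R := fun n hn => by rw [coeff_C_mul, hx n hn, mul_zero]

theorem coeff_mul_of_mem_posSupported {x y : LaurentSeries R} (hx : x ∈ posSupported R)
    (hy : y ∈ posSupported R) (n : ℤ) :
    (x * y).coeff n = ∑ k ∈ Ioo 0 n, x.coeff k * y.coeff (n - k) := by
  rw [coeff_mul]
  refine sum_bij_ne_zero (fun p _ _ => p.1) ?_ ?_ ?_ ?_
  · rintro ⟨j, k⟩ hjk hne
    obtain ⟨-, -, rfl⟩ := mem_antidiagonal.1 hjk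
    have h1 : 0 < j := by by_contra h; exact hne (by rw [hx j (by omega), zero_mul])
    have h2 : 0 < k := by by_contra h; exact hne (by rw [hy k (by omega), mul_zero])
    exact mem_Ioo.2 ⟨h1, by omega⟩
  · rintro ⟨j, k⟩ hjk - ⟨j', k'⟩ hjk' - (rfl : j = j')
    obtain ⟨-, -, h⟩ := mem_antidiagonal.1 hjk
    obtain ⟨-, -, h'⟩ := mem_antidiagonal.1 hjk'
    simp only [Prod.mk.injEq, true_and]
    omega
  · intro k hk hne
    refine ⟨(k, n - k), mem_antidiagonal.2 ⟨fun h => hne ?_, fun h => hne ?_, by ring⟩, hne, rfl⟩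
    · rw [h, zero_mul]
    · rw [h, mul_zero]
  · rintro ⟨j, k⟩ hjk -
    obtain ⟨-, -, rfl⟩ := mem_antidiagonal.1 hjk
    simp

/-- `truncShift k x = (ξ^k x)₊`, the part of `ξ^k x` with strictly positive exponents. -/
def truncShift (k : ℤ) : LaurentSeries R →+ LaurentSeries R where
  toFun x :=
    { coeff := fun n => if 0 < n then x.coeff (n + k) else 0
      isPWO_support' := (x.isPWO_support.image_of_monotone (f := fun m => m - k)
          fun _ _ h => sub_le_sub_right h k).mono fun n hn => by
        refine ⟨n + k, ?_, by ring⟩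
        by_contra h
        exact hn (by simp only [HahnSeries.mem_support, not_not] at h; simp [h]) }
  map_zero' := by ext; simp
  map_add' x y := by ext n; simp only [coeff_add]; split_ifs <;> simp

@[simp]
theorem coeff_truncShift (k : ℤ) (x : LaurentSeries R) (n : ℤ) :
    (truncShift k x).coeff n = if 0 < n then x.coeff (n + k) else 0 := rfl

theorem truncShift_mem_posSupported (k : ℤ) (x : LaurentSeries R) :
    truncShift k x ∈ posSupported R := fun n hn => by simp [show ¬ 0 < n by omega]

theorem truncShift_C_mul (k : ℤ) (u : R) (x : LaurentSeries R) :
    truncShift k (C u * x) = C u * truncShift k x := by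
  ext n
  simp only [coeff_truncShift, coeff_C_mul]
  split_ifs <;> simp

theorem truncShift_C {k : ℤ} (hk : 0 < k) (u : R) : truncShift k (C u) = 0 := by
  ext n
  simp only [coeff_truncShift, C_apply, coeff_single, coeff_zero]
  split_ifs <;> first | rfl | omega

theorem coeff_truncShift_mul {y : LaurentSeries R} (hy : y ∈ posSupported R) (k : ℤ)
    (x : LaurentSeries R) (n : ℤ) :
    (truncShift k x * y).coeff n = ∑ s ∈ Ioo k (n + k), x.coeff s * y.coeff (n + k - s) := by
  have hIoo : Ioo k (n + k) = (Ioo 0 n).map (addRightEmbedding k) := by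
    rw [map_add_right_Ioo, zero_add]
  rw [coeff_mul_of_mem_posSupported (truncShift_mem_posSupported k x) hy, hIoo, sum_map]
  refine sum_congr rfl fun j hj => ?_
  simp [(mem_Ioo.1 hj).1, add_sub_add_right_eq_sub]

theorem sum_Ioo_reflect_eq (f g : ℤ → R) {p q M : ℤ} (hp : 0 ≤ p) (hq : 0 ≤ q)
    (hM : p + q + 1 = M) :
    ∑ s ∈ Ioo p M, (f s * g (M - s) - g s * f (M - s)) =
      ∑ s ∈ Ioo q M, (f s * g (M - s) - g s * f (M - s)) := by
  wlog hpq : p ≤ q generalizing p q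
  · exact (this hq hp (by omega) (by omega)).symm
  have hsplit : Ioo p M = Ioc p q ∪ Ioo q M := by
    ext s
    simp only [mem_union, mem_Ioo, mem_Ioc]
    omega
  have hdisj : Disjoint (Ioc p q) (Ioo q M) :=
    disjoint_left.2 fun s h1 h2 => by simp only [mem_Ioo, mem_Ioc] at h1 h2; omega
  -- `s ↦ M - s` maps `(p, q]` onto itself and swaps the two products
  have hzero : ∑ s ∈ Ioc p q, (f s * g (M - s) - g s * f (M - s)) = 0 := by
    rw [sum_sub_distrib, sub_eq_zero]
    refine sum_nbij' (M - ·) (M - ·) ?_ ?_ (fun s _ => by simp) (fun s _ => by simp) ?_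
    · intro s hs
      simp only [mem_Ioc] at hs ⊢
      omega
    · intro s hs
      simp only [mem_Ioc] at hs ⊢
      omega
    · intro s _
      simp [mul_comm]
  rw [hsplit, sum_union hdisj, hzero, zero_add]

/-- Half the `(0,1)` entry of `[R, (ξ^k R)₊]` for `R = [[2 + x, y], [*, -x]]`. -/
def offDiagFlow (k : ℤ) (x y : LaurentSeries R) : LaurentSeries R :=
  truncShift k y * (1 + x) - truncShift k x * y

theorem offDiagFlow_mem_posSupported {x y : LaurentSeries R} (hx : x ∈ posSupported R)
    (hy : y ∈ posSupported R) (k : ℤ) : offDiagFlow k x y ∈ posSupported R := by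
  rw [offDiagFlow, mul_one_add]
  have := truncShift_mem_posSupported (R := R) k
  exact sub_mem (add_mem (this y) (mul_mem (this y) hx)) (mul_mem (this x) hy)

theorem coeff_offDiagFlow {x y : LaurentSeries R} (hx : x ∈ posSupported R)
    (hy : y ∈ posSupported R) (k : ℤ) {n : ℤ} (hn : 0 < n) :
    (offDiagFlow k x y).coeff n = y.coeff (n + k) +
      ∑ s ∈ Ioo k (n + k), (y.coeff s * x.coeff (n + k - s) - x.coeff s * y.coeff (n + k - s)) := by
  rw [offDiagFlow, mul_one_add, coeff_sub, coeff_add, coeff_truncShift, if_pos hn,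
    coeff_truncShift_mul hx, coeff_truncShift_mul hy, sum_sub_distrib, add_sub_assoc]

theorem coeff_offDiagFlow_comm {x y : LaurentSeries R} (hx : x ∈ posSupported R)
    (hy : y ∈ posSupported R) {k l : ℤ} (hk : 0 < k) (hl : 0 < l) :
    (offDiagFlow k x y).coeff (l + 1) = (offDiagFlow l x y).coeff (k + 1) := by
  rw [coeff_offDiagFlow hx hy k (by omega), coeff_offDiagFlow hx hy l (by omega),
    show k + 1 + l = l + 1 + k by ring,
    sum_Ioo_reflect_eq (fun s => y.coeff s) (fun s => x.coeff s) hk.le hl.le (by ring)]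

end LaurentSeries

theorem coeff_xiL_mul (x : NLSL) (n : ℤ) : (xiL * x).coeff n = x.coeff (n + 1) := by
  simpa [xiL] using coeff_single_mul_add (r := (1 : NLSE)) (x := x) (a := n + 1) (b := -1)

theorem truncShift_xiL_mul (k : ℤ) (x : NLSL) :
    truncShift k (xiL * x) = xiL * truncShift k x - C (x.coeff (k + 1)) := by
  ext n
  simp only [coeff_sub, coeff_xiL_mul, coeff_truncShift, C_apply, coeff_single]
  rcases lt_trichotomy n 0 with h | rfl | h
  · simp [h.ne, show ¬ 0 < n + 1 by omega, show ¬ 0 < n by omega]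
  · simp [add_comm]
  · simp [h, h.ne', show 0 < n + 1 by omega, add_right_comm n 1 k]

section dmapHom

variable (d : Derivation ℂ NLSE NLSE)

def dmapHom : NLSL →+ NLSL where
  toFun := dmap d
  map_zero' := HahnSeries.ext (funext fun _ => d.map_zero)
  map_add' _ _ := HahnSeries.ext (funext fun _ => d.map_add _ _)

theorem dmapHom_apply (x : NLSL) : dmapHom d x = dmap d x := rfl

@[simp]
theorem coeff_dmapHom (x : NLSL) (n : ℤ) :
    (dmapHom d x).coeff n = d (x.coeff n) := rfl

theorem dmapHom_C (u : NLSE) : dmapHom d (C u) = C (d u) := by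
  ext n
  simp only [coeff_dmapHom, C_apply, coeff_single]
  split_ifs <;> simp

theorem dmapHom_mul (x y : NLSL) :
    dmapHom d (x * y) = dmapHom d x * y + x * dmapHom d y := by
  have hsx : (dmapHom d x).support ⊆ x.support := fun m hm h =>
    hm (show d (x.coeff m) = 0 by rw [show x.coeff m = 0 from h, map_zero])
  have hsy : (dmapHom d y).support ⊆ y.support := fun m hm h =>
    hm (show d (y.coeff m) = 0 by rw [show y.coeff m = 0 from h, map_zero])
  ext1
  funext n
  rw [coeff_add, coeff_mul_left' x.isPWO_support hsx, coeff_mul_right' y.isPWO_support hsy,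
    ← sum_add_distrib, coeff_dmapHom, coeff_mul, map_sum]
  refine sum_congr rfl fun p _ => ?_
  simp only [coeff_dmapHom, Derivation.leibniz, smul_eq_mul]
  ring

theorem dmapHom_two : dmapHom d 2 = 0 := by
  rw [← map_ofNat C 2, dmapHom_C, ← Nat.cast_ofNat, d.map_natCast, map_zero]

theorem dmapHom_one : dmapHom d 1 = 0 := by
  rw [← map_one C, dmapHom_C, d.map_one_eq_zero, map_zero]

theorem dmapHom_C_mul (u : NLSE) (x : NLSL) :
    dmapHom d (C u * x) = C (d u) * x + C u * dmapHom d x := by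
  rw [dmapHom_mul, dmapHom_C]

theorem dmapHom_two_mul (x : NLSL) :
    dmapHom d (2 * x) = 2 * dmapHom d x := by
  rw [two_mul, two_mul, map_add]

theorem dmapHom_xiL_mul (x : NLSL) :
    dmapHom d (xiL * x) = xiL * dmapHom d x := by
  ext1
  funext n
  simp [coeff_xiL_mul]

theorem truncShift_dmapHom (k : ℤ) (x : NLSL) :
    truncShift k (dmapHom d x) = dmapHom d (truncShift k x) := by
  ext n
  simp only [coeff_dmapHom, coeff_truncShift]
  split_ifs <;> simp

theorem dmapHom_mem_posSupported {x : NLSL}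
    (hx : x ∈ posSupported NLSE) : dmapHom d x ∈ posSupported NLSE := fun n hn => by
  rw [coeff_dmapHom, hx n hn, map_zero]

end dmapHom

theorem dmapHom_comm {d e : Derivation ℂ NLSE NLSE} (h : ∀ u, d (e u) = e (d u)) (x : NLSL) :
    dmapHom d (dmapHom e x) = dmapHom e (dmapHom d x) :=
  HahnSeries.ext (funext fun _ => h _)

theorem eps_mul_epsInv : eps * epsInv = 1 := by
  rw [eps, epsInv, ← LaurentPolynomial.T_add, add_neg_cancel, LaurentPolynomial.T_zero]

theorem isUnit_eps : IsUnit eps := LaurentPolynomial.isUnit_T 1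

theorem isUnit_two : IsUnit (2 : NLSE) := by
  have h := (isUnit_of_invertible (2 : ℂ)).map (algebraMap ℂ NLSE)
  rwa [map_ofNat] at h

theorem map_epsInv {d : Derivation ℂ NLSE NLSE} (hd : d eps = 0) : d epsInv = 0 := by
  have h := d.leibniz eps epsInv
  rw [eps_mul_epsInv, d.map_one_eq_zero, hd, smul_zero, add_zero, smul_eq_mul] at h
  exact (isUnit_eps.mul_right_eq_zero.1 h.symm)

theorem map_two_pow (d : Derivation ℂ NLSE NLSE) (m : ℕ) : d ((2 : NLSE) ^ m) = 0 := by
  simpa using d.map_natCast (2 ^ m)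

theorem map_two_pow_mul_epsInv_mul {d : Derivation ℂ NLSE NLSE} (hd : d eps = 0) (m : ℕ)
    (x : NLSE) : d (2 ^ m * epsInv * x) = 2 ^ m * epsInv * d x := by
  simp only [d.leibniz, map_two_pow, map_epsInv hd, smul_eq_mul, mul_zero, add_zero]

theorem linearized_eq_zero {d : Derivation ℂ NLSE NLSE} {u q r : NLSE} {a b c X Y Z : NLSL}
    (ha : a ∈ posSupported NLSE) (hb : b ∈ posSupported NLSE) (hc : c ∈ posSupported NLSE)
    (hX : X ∈ posSupported NLSE) (hY : Y ∈ posSupported NLSE) (hZ : Z ∈ posSupported NLSE)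
    (h1 : 2 * (xiL * Y) = C u * dmapHom d Y + 2 * (C q * X))
    (h2 : 2 * (xiL * Z) = -(C u * dmapHom d Z) - 2 * (C r * X))
    (h3 : 2 * X + 2 * (a * X) + b * Z + c * Y = 0) :
    X = 0 ∧ Y = 0 ∧ Z = 0 := by
  have cancel_two {v : NLSE} (h : 2 * v = 0) : v = 0 := isUnit_two.mul_right_eq_zero.1 h
  have step (N : ℤ) (ih : ∀ m ≤ N, X.coeff m = 0 ∧ Y.coeff m = 0 ∧ Z.coeff m = 0) :
      X.coeff (N + 1) = 0 ∧ Y.coeff (N + 1) = 0 ∧ Z.coeff (N + 1) = 0 := by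
    obtain ⟨hXN, hYN, hZN⟩ := ih N le_rfl
    have e1 := congrArg (coeff · N) h1
    have e2 := congrArg (coeff · N) h2
    have e3 := congrArg (coeff · (N + 1)) h3
    have low {x w : NLSL} (hx : x ∈ posSupported NLSE) (hw : ∀ m ≤ N, w.coeff m = 0) :
        (x * w).coeff (N + 1) = 0 :=
      coeff_mul_eq_zero_of_pos hx fun m hm => hw m (by omega)
    simp only [coeff_two_mul, coeff_xiL_mul, coeff_add, coeff_sub, coeff_neg, coeff_C_mul,
      coeff_dmapHom, hXN, hYN, hZN, map_zero, mul_zero, add_zero, sub_zero, neg_zero,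
      coeff_zero, low ha fun m hm => (ih m hm).1, low hb fun m hm => (ih m hm).2.2,
      low hc fun m hm => (ih m hm).2.1] at e1 e2 e3
    exact ⟨cancel_two e3, cancel_two e1, cancel_two e2⟩
  have upto (N : ℕ) : ∀ m ≤ (N : ℤ), X.coeff m = 0 ∧ Y.coeff m = 0 ∧ Z.coeff m = 0 := by
    induction N with
    | zero => exact fun m hm => ⟨hX m hm, hY m hm, hZ m hm⟩
    | succ N ih =>
      intro m hm
      rcases lt_or_eq_of_le hm with hlt | rfl
      · exact ih m (by omega)
      · exact_mod_cast step N ih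
  have hall (n : ℤ) := upto n.toNat n (Int.self_le_toNat n)
  exact ⟨HahnSeries.ext (funext fun n => (hall n).1), HahnSeries.ext (funext fun n => (hall n).2.1),
    HahnSeries.ext (funext fun n => (hall n).2.2)⟩

end NLS

open NLS HahnSeries

namespace IsMR

variable {del : Derivation ℂ NLSE NLSE} {a b c : NLSL}

theorem lax_entries (hR : IsMR del a b c) :
    C eps * dmapHom del a = C (qv 0) * c + C (rv 0) * b ∧
    2 * (xiL * b) = C eps * dmapHom del b + 2 * (C (qv 0) * (1 + a)) ∧
    2 * (xiL * c) = -(C eps * dmapHom del c) - 2 * (C (rv 0) * (1 + a)) := by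
  have h := hR.2.2.2.2.2.2.1
  have h00 := congrFun (congrFun h 0) 0
  have h01 := congrFun (congrFun h 0) 1
  have h10 := congrFun (congrFun h 1) 0
  simp only [Umat, Rmat, CL, Matrix.add_apply, Matrix.smul_apply, Matrix.map_apply,
    Matrix.sub_apply, Matrix.mul_apply, Fin.sum_univ_two, Matrix.of_apply, Matrix.cons_val',
    Matrix.cons_val_zero, Matrix.cons_val_one, Matrix.empty_val', Matrix.cons_val_fin_one,
    Matrix.zero_apply, smul_eq_mul, ← dmapHom_apply, map_add, dmapHom_two] at h00 h01 h10
  exact ⟨by linear_combination h00, by linear_combination -h01, by linear_combination h10⟩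

theorem det_eq (hR : IsMR del a b c) : 2 * a + a * a + b * c = 0 := by
  have h := hR.2.2.2.2.2.2.2
  rw [Rmat, Matrix.det_fin_two_of] at h
  linear_combination -h

theorem lax_entries_truncShift (hR : IsMR del a b c) {k : ℤ} (hk : 0 < k) :
    C eps * dmapHom del (truncShift k a) = C (qv 0) * truncShift k c + C (rv 0) * truncShift k b ∧
    2 * (xiL * truncShift k b) = C eps * dmapHom del (truncShift k b) +
      2 * (C (qv 0) * truncShift k a) + 2 * C (b.coeff (k + 1)) ∧
    2 * (xiL * truncShift k c) = -(C eps * dmapHom del (truncShift k c)) -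
      2 * (C (rv 0) * truncShift k a) + 2 * C (c.coeff (k + 1)) := by
  obtain ⟨h1, h2, h3⟩ := hR.lax_entries
  have e1 := congrArg (truncShift k) h1
  have e2 := congrArg (truncShift k) h2
  have e3 := congrArg (truncShift k) h3
  simp only [two_mul, mul_add, mul_one, map_add, map_sub, map_neg, truncShift_C_mul,
    truncShift_C hk, truncShift_xiL_mul, truncShift_dmapHom, add_zero] at e1 e2 e3
  exact ⟨by linear_combination e1, by linear_combination e2, by linear_combination e3⟩

theorem lax_entries_dmapHom (hR : IsMR del a b c) {D : Derivation ℂ NLSE NLSE}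
    (hcomm : ∀ x, D (del x) = del (D x)) (hDe : D eps = 0) :
    2 * (xiL * dmapHom D b) = C eps * dmapHom del (dmapHom D b) +
      2 * (C (D (qv 0)) * (1 + a) + C (qv 0) * dmapHom D a) ∧
    2 * (xiL * dmapHom D c) = -(C eps * dmapHom del (dmapHom D c)) -
      2 * (C (D (rv 0)) * (1 + a) + C (rv 0) * dmapHom D a) := by
  obtain ⟨-, h2, h3⟩ := hR.lax_entries
  have e2 := congrArg (dmapHom D) h2
  have e3 := congrArg (dmapHom D) h3
  simp only [map_add, map_sub, map_neg, dmapHom_two_mul, dmapHom_xiL_mul, dmapHom_C_mul,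
    dmapHom_one, hDe, map_zero, zero_mul, zero_add, dmapHom_comm hcomm] at e2 e3
  exact ⟨by linear_combination e2, by linear_combination e3⟩

theorem det_dmapHom (hR : IsMR del a b c) (D : Derivation ℂ NLSE NLSE) :
    2 * dmapHom D a + 2 * (a * dmapHom D a) + b * dmapHom D c + c * dmapHom D b = 0 := by
  have e := congrArg (dmapHom D) hR.det_eq
  simp only [map_add, dmapHom_mul, dmapHom_two, map_zero] at e
  linear_combination e

theorem flow (hR : IsMR del a b c)
    (hdel : del eps = 0) {D : Derivation ℂ NLSE NLSE} (hcomm : ∀ x, D (del x) = del (D x))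
    (hDe : D eps = 0) {lam : NLSE} (hlam : del lam = 0) {k : ℤ} (hk : 0 < k)
    (hq : eps * D (qv 0) = 2 * lam * b.coeff (k + 1))
    (hr : eps * D (rv 0) = 2 * lam * c.coeff (k + 1)) :
    C eps * dmapHom D b = C (2 * lam) * offDiagFlow k a b ∧
      C eps * dmapHom D c = -(C (2 * lam) * offDiagFlow k a c) := by
  have ha : a ∈ posSupported NLSE := hR.1
  have hb : b ∈ posSupported NLSE := hR.2.1
  have hc : c ∈ posSupported NLSE := hR.2.2.1
  obtain ⟨o1, o2, o3⟩ := hR.lax_entries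
  obtain ⟨s1, s2, s3⟩ := hR.lax_entries_truncShift hk
  obtain ⟨e1, e2⟩ := hR.lax_entries_dmapHom hcomm hDe
  have e3 := hR.det_dmapHom D
  have hq' : (C eps * C (D (qv 0)) : NLSL) = 2 * C lam * C (b.coeff (k + 1)) := by
    simpa only [map_mul, map_ofNat] using congrArg (C : NLSE →+* NLSL) hq
  have hr' : (C eps * C (D (rv 0)) : NLSL) = 2 * C lam * C (c.coeff (k + 1)) := by
    simpa only [map_mul, map_ofNat] using congrArg (C : NLSE →+* NLSL) hr
  have hts := truncShift_mem_posSupported (R := NLSE) k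
  -- `X`, `Y`, `Z` are the entries of `ε D R - lam [R, (ξ^k R)₊]`
  set X := C eps * dmapHom D a - C lam * (b * truncShift k c - truncShift k b * c) with hXdef
  set Y := C eps * dmapHom D b - C (2 * lam) * offDiagFlow k a b with hYdef
  set Z := C eps * dmapHom D c + C (2 * lam) * offDiagFlow k a c with hZdef
  have hX : X ∈ posSupported NLSE :=
    sub_mem (C_mul_mem_posSupported _ (dmapHom_mem_posSupported D ha))
      (C_mul_mem_posSupported _ (sub_mem (mul_mem hb (hts c)) (mul_mem (hts b) hc)))
  have hY : Y ∈ posSupported NLSE :=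
    sub_mem (C_mul_mem_posSupported _ (dmapHom_mem_posSupported D hb))
      (C_mul_mem_posSupported _ (offDiagFlow_mem_posSupported ha hb k))
  have hZ : Z ∈ posSupported NLSE :=
    add_mem (C_mul_mem_posSupported _ (dmapHom_mem_posSupported D hc))
      (C_mul_mem_posSupported _ (offDiagFlow_mem_posSupported ha hc k))
  have h1 : 2 * (xiL * Y) = C eps * dmapHom del Y + 2 * (C (qv 0) * X) := by
    simp only [hXdef, hYdef, offDiagFlow, map_sub, map_add, map_mul, map_ofNat, dmapHom_mul,
      dmapHom_C, dmapHom_one, dmapHom_two, hdel, hlam, map_zero, zero_mul, mul_zero, zero_add,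
      add_zero]
    linear_combination C eps * e1 + 2 * (1 + a) * hq' - 2 * C lam * (1 + a) * s2
      + 2 * C lam * truncShift k a * o2 + 2 * C lam * truncShift k b * o1 - 2 * C lam * b * s1
  have h2 : 2 * (xiL * Z) = -(C eps * dmapHom del Z) - 2 * (C (rv 0) * X) := by
    simp only [hXdef, hZdef, offDiagFlow, map_sub, map_add, map_mul, map_ofNat, dmapHom_mul,
      dmapHom_C, dmapHom_one, dmapHom_two, hdel, hlam, map_zero, zero_mul, mul_zero, zero_add,
      add_zero]
    linear_combination C eps * e2 - 2 * (1 + a) * hr' + 2 * C lam * (1 + a) * s3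
      - 2 * C lam * truncShift k a * o3 + 2 * C lam * truncShift k c * o1 - 2 * C lam * c * s1
  have h3 : 2 * X + 2 * (a * X) + b * Z + c * Y = 0 := by
    simp only [hXdef, hYdef, hZdef, offDiagFlow, map_mul, map_ofNat]
    linear_combination C eps * e3
  obtain ⟨-, hY0, hZ0⟩ := linearized_eq_zero ha hb hc hX hY hZ h1 h2 h3
  exact ⟨sub_eq_zero.1 hY0, eq_neg_of_add_eq_zero_left hZ0⟩

end IsMR

theorem IsDel.eq_zero_of_commute {del : Derivation ℂ NLSE NLSE} (hdel : IsDel del)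
    {d : Derivation ℂ NLSE NLSE} (hcomm : ∀ x, d (del x) = del (d x)) (he : d eps = 0)
    (hq : d (qv 0) = 0) (hr : d (rv 0) = 0) : d = 0 := by
  have hqk (k : ℕ) : d (qv k) = 0 := by
    induction k with
    | zero => exact hq
    | succ k ih => rw [← hdel.1 k, hcomm, ih, map_zero]
  have hrk (k : ℕ) : d (rv k) = 0 := by
    induction k with
    | zero => exact hr
    | succ k ih => rw [← hdel.2.1 k, hcomm, ih, map_zero]
  have hC (p : NLSA) : d (LaurentPolynomial.C p) = 0 := by
    have h : d.compAlgebraMap NLSA = 0 := MvPolynomial.derivation_ext fun v => by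
      cases v with
      | q k => exact hqk k
      | r k => exact hrk k
    exact DFunLike.congr_fun h p
  have hT (n : ℤ) : d (LaurentPolynomial.T n) = 0 := by
    induction n using Int.induction_on with
    | zero => rw [LaurentPolynomial.T_zero, d.map_one_eq_zero]
    | succ n ih =>
      rw [LaurentPolynomial.T_add, d.leibniz, ih, show LaurentPolynomial.T 1 = eps from rfl, he,
        smul_zero, smul_zero, add_zero]
    | pred n ih =>
      rw [sub_eq_add_neg, LaurentPolynomial.T_add, d.leibniz, ih,
        show LaurentPolynomial.T (-1) = epsInv from rfl, map_epsInv he, smul_zero, smul_zero, add_zero]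
  refine Derivation.ext fun x => ?_
  induction x using LaurentPolynomial.induction_on' with
  | add p q hp hq => rw [map_add, hp, hq, map_add]
  | C_mul_T n p => rw [d.leibniz, hC, hT, smul_zero, smul_zero, add_zero, Derivation.zero_apply]

theorem IsNLSD.eps_sq_mul_map_map {del : Derivation ℂ NLSE NLSE} {a b c : NLSL}
    {D : ℕ → Derivation ℂ NLSE NLSE} (hD : IsNLSD del b c D) (hdel : IsDel del)
    (hR : IsMR del a b c) (i j : ℕ) :
    eps ^ 2 * D i (D j (qv 0)) =
        2 ^ (i + j + 2) * (offDiagFlow ((i : ℤ) + 1) a b).coeff ((j : ℤ) + 1 + 1) ∧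
      eps ^ 2 * D i (D j (rv 0)) =
        -(2 ^ (i + j + 2) * (offDiagFlow ((i : ℤ) + 1) a c).coeff ((j : ℤ) + 1 + 1)) := by
  obtain ⟨hcomm, hDe, hDq, hDr⟩ := hD
  have hcast (m : ℕ) : ((m + 1 : ℕ) : ℤ) + 1 = (m : ℤ) + 1 + 1 := by push_cast; ring
  have hq (m : ℕ) : eps * D m (qv 0) = 2 * 2 ^ m * b.coeff ((m : ℤ) + 1 + 1) := by
    rw [hDq, coA, hcast]
    linear_combination (2 * 2 ^ m * b.coeff ((m : ℤ) + 1 + 1)) * eps_mul_epsInv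
  have hr (m : ℕ) : eps * D m (rv 0) = 2 * 2 ^ m * c.coeff ((m : ℤ) + 1 + 1) := by
    rw [hDr, coA, hcast]
    linear_combination (2 * 2 ^ m * c.coeff ((m : ℤ) + 1 + 1)) * eps_mul_epsInv
  obtain ⟨hfb, hfc⟩ := hR.flow hdel.2.2 (hcomm i) (hDe i) (map_two_pow del i)
    (by positivity : (0 : ℤ) < i + 1) (hq i) (hr i)
  have hb := congrArg (coeff · ((j : ℤ) + 1 + 1)) hfb
  have hc := congrArg (coeff · ((j : ℤ) + 1 + 1)) hfc
  simp only [coeff_C_mul, coeff_neg, coeff_dmapHom] at hb hc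
  rw [hDq, hDr, coA, coA, hcast, map_two_pow_mul_epsInv_mul (hDe i),
    map_two_pow_mul_epsInv_mul (hDe i)]
  constructor
  · linear_combination (2 ^ (j + 1) * eps * D i (b.coeff ((j : ℤ) + 1 + 1))) * eps_mul_epsInv
      + 2 ^ (j + 1) * hb
  · linear_combination (2 ^ (j + 1) * eps * D i (c.coeff ((j : ℤ) + 1 + 1))) * eps_mul_epsInv
      + 2 ^ (j + 1) * hc

/-- Lemma 2.2: the NLS derivations commute pairwise. -/
theorem nls_derivations_commute
    (del : Derivation ℂ NLSE NLSE) (hdel : IsDel del)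
    (a b c : NLSL) (hR : IsMR del a b c)
    (D : ℕ → Derivation ℂ NLSE NLSE) (hD : IsNLSD del b c D) :
    ∀ i j : ℕ, ∀ x : NLSE, D i (D j x) = D j (D i x) := by
  intro i j x
  have hsq := hD.eps_sq_mul_map_map hdel hR
  have hsymm {y : NLSL} (hy : y ∈ posSupported NLSE) :
      (offDiagFlow ((i : ℤ) + 1) a y).coeff ((j : ℤ) + 1 + 1) =
        (offDiagFlow ((j : ℤ) + 1) a y).coeff ((i : ℤ) + 1 + 1) :=
    coeff_offDiagFlow_comm hR.1 hy (by positivity) (by positivity)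
  have hcancel {y : NLSE} (h : eps ^ 2 * D i (D j y) = eps ^ 2 * D j (D i y)) :
      ⁅D i, D j⁆ y = 0 := by
    rw [Derivation.commutator_apply, sub_eq_zero]
    exact (isUnit_eps.pow 2).mul_left_cancel h
  have hzero : ⁅D i, D j⁆ = 0 := hdel.eq_zero_of_commute
    (fun y => by simp only [Derivation.commutator_apply, hD.1, map_sub])
    (by rw [Derivation.commutator_apply, hD.2.1, hD.2.1, map_zero, map_zero, sub_zero])
    (hcancel (by rw [(hsq i j).1, (hsq j i).1, hsymm hR.2.1, add_comm j i]))
    (hcancel (by rw [(hsq i j).2, (hsq j i).2, hsymm hR.2.2.1, add_comm j i]))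
  simpa [Derivation.commutator_apply, sub_eq_zero] using DFunLike.congr_fun hzero x

end
end
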